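/- arXiv:1402.4201 — 4 statements merged into one kernel-verified Lean document; each statement's English description precedes it below -/
import Mathlib

section
/- A morphism of schemes of finite type over a field that is both quasi-affine and proper is finite. -/
open AlgebraicGeometry CategoryTheory CategoryTheory.Limits Polynomial TensorProduct

universe u

section Aux

namespace QAHelper

/-- Cancellation for universally closed morphisms: if `f ≫ g` is universally closed and
`g` is separated, then `f` is universally closed. -/
lemma uc_of_comp {X Y Z : Scheme.{u}} (f : X ⟶ Y) (g : Y ⟶ Z)
    [UniversallyClosed (f ≫ g)] [IsSeparated g] : UniversallyClosed f := by
  rw [← pullback.lift_snd (𝟙 _) f (Category.id_comp (f ≫ g))]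
  have := universallyClosed_snd (f ≫ g) g
  infer_instance

/-- If `Spec.map φ` is universally closed then `φ` is integral. -/
lemma isIntegral_of_universallyClosed {R S : CommRingCat.{u}} (φ : R ⟶ S)
    (h : UniversallyClosed (Spec.map φ)) : RingHom.IsIntegral φ.hom := by
  letI := φ.hom.toAlgebra
  have hφ : CommRingCat.ofHom (algebraMap R S) = φ := rfl
  have hpush :
      IsPushout (CommRingCat.ofHom (algebraMap R R[X])) φ
        (CommRingCat.ofHom (Algebra.TensorProduct.includeRight.toRingHom :
          R[X] →+* S ⊗[R] R[X]))
        (CommRingCat.ofHom (Algebra.TensorProduct.includeLeftRingHom :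
          S →+* S ⊗[R] R[X])) := by
    rw [← hφ]
    exact (CommRingCat.isPushout_tensorProduct R S R[X]).flip
  have hpb := isPullback_SpecMap_of_isPushout _ _ _ _ hpush
  have hclosed := h.universally_isClosedMap _ _ _ hpb
  apply PrimeSpectrum.isIntegral_of_isClosedMap_comap_mapRingHom
  have he : (mapRingHom φ.hom) =
      ((polyEquivTensor R S).symm.toRingEquiv.toRingHom).comp
        (Algebra.TensorProduct.includeRight.toRingHom : R[X] →+* S ⊗[R] R[X]) := by
    apply ringHom_ext
    · intro r
      simp only [coe_mapRingHom, map_C, RingHom.coe_comp, RingEquiv.toRingHom_eq_coe,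
        RingEquiv.coe_toRingHom, Function.comp_apply, AlgHom.toRingHom_eq_coe, AlgHom.coe_coe,
        Algebra.TensorProduct.includeRight_apply, AlgEquiv.toRingEquiv_eq_coe,
        AlgEquiv.coe_ringEquiv]
      erw [Algebra.TensorProduct.includeRight_apply]
      rw [polyEquivTensor_symm_apply_tmul, Polynomial.sum_C_index] <;>
        simp [RingHom.algebraMap_toAlgebra]
    · simp only [coe_mapRingHom, map_X, RingHom.coe_comp, RingEquiv.toRingHom_eq_coe,
        RingEquiv.coe_toRingHom, Function.comp_apply, AlgHom.toRingHom_eq_coe, AlgHom.coe_coe,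
        Algebra.TensorProduct.includeRight_apply, AlgEquiv.toRingEquiv_eq_coe,
        AlgEquiv.coe_ringEquiv]
      erw [Algebra.TensorProduct.includeRight_apply]
      rw [polyEquivTensor_symm_apply_tmul, Polynomial.sum_X_index (by simp)]
      simp only [map_one, one_mul]
      exact (Polynomial.monomial_one_one_eq_X).symm
  have hclosed' : IsClosedMap (PrimeSpectrum.comap
      (Algebra.TensorProduct.includeRight.toRingHom : R[X] →+* S ⊗[R] R[X])) := hclosed
  rw [he, PrimeSpectrum.comap_comp]
  exact hclosed'.comp (PrimeSpectrum.isClosedMap_comap_of_isIntegral _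
    (RingHom.isIntegral_of_surjective _ (polyEquivTensor R S).symm.toRingEquiv.surjective))

/-- An affine universally closed morphism is integral. -/
lemma isIntegralHom_of_isAffineHom_of_universallyClosed {X Y : Scheme.{u}} (f : X ⟶ Y)
    [IsAffineHom f] [UniversallyClosed f] : IsIntegralHom f := by
  exact IsIntegralHom.iff_universallyClosed_and_isAffineHom.mpr ⟨‹_›, ‹_›⟩

end QAHelper

end Aux

/-- A morphism of schemes of finite type over a field that is both quasi-affine
(it factors as a dense open immersion into a scheme affine over the target)
and proper is finite. -/
theorem stmt_0 (k : Type*) [Field k] (X S : Scheme)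
    (sX : X ⟶ Spec (CommRingCat.of k)) (sS : S ⟶ Spec (CommRingCat.of k))
    [LocallyOfFiniteType sX] [QuasiCompact sX]
    [LocallyOfFiniteType sS] [QuasiCompact sS]
    (f : X ⟶ S) (hcomp : f ≫ sS = sX)
    (hqaff : ∃ (Z : Scheme) (j : X ⟶ Z) (g : Z ⟶ S),
      IsOpenImmersion j ∧ Dense (Set.range j.base) ∧ IsAffineHom g ∧ j ≫ g = f)
    [IsProper f] : IsFinite f := by
  obtain ⟨Z, j, g, hj, hdense, hg, rfl⟩ := hqaff
  haveI := hj
  haveI := hg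
  haveI : IsSeparated g := .of_isAffineHom g
  haveI : UniversallyClosed j := QAHelper.uc_of_comp j g
  have hcl : IsClosed (Set.range j.base) := by
    simpa using (Scheme.Hom.isClosedMap j) Set.univ isClosed_univ
  have hsurj : Function.Surjective j.base := by
    rw [← Set.range_eq_univ, ← hcl.closure_eq]
    exact hdense.closure_eq
  haveI : Epi j.base := (TopCat.epi_iff_surjective _).mpr hsurj
  haveI : IsIso j := IsOpenImmersion.isIso j
  haveI : IsAffineHom (j ≫ g) := inferInstance
  haveI : IsIntegralHom (j ≫ g) :=
    QAHelper.isIntegralHom_of_isAffineHom_of_universallyClosed (j ≫ g)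
  rw [IsFinite.iff_isIntegralHom_and_locallyOfFiniteType]
  exact ⟨inferInstance, inferInstance⟩
end

section
/- Relative Picard group exact sequence: for an integral scheme X̄ with closed subscheme Y, there is an exact sequence 0 → Γ(X̄, G_{X̄,Y}) → G(X̄,Y) → Div(X̄,Y) → P̃ic(X̄,Y) → 0. -/
open AlgebraicGeometry CategoryTheory

noncomputable section

variable (X Y : Scheme.{0}) [AlgebraicGeometry.IsIntegral X] (ι : Y ⟶ X) [IsClosedImmersion ι]

/-- A rational function `g ∈ K(X)ˣ` is a unit at the point `x` if it is the image of
a unit of the local ring `O_{X,x}`. -/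
def unitAt (g : (X.functionField)ˣ) (x : X) : Prop :=
  ∃ h : X.presheaf.stalk x, IsUnit h ∧
    algebraMap (X.presheaf.stalk x) X.functionField h = (g : X.functionField)

/-- A family of local equations `D : x ↦ D x ∈ K(X)ˣ` defines a Cartier divisor if,
locally around each point `x`, all the local equations agree up to a unit. -/
def IsCartierData (D : X → (X.functionField)ˣ) : Prop :=
  ∀ x : X, ∃ U : X.Opens, x ∈ U ∧ ∀ y ∈ U, unitAt X (D x * (D y)⁻¹) y

/-- The support of the Cartier divisor `D` is disjoint from the closed subscheme `Y`. -/
def AvoidsY (D : X → (X.functionField)ˣ) : Prop :=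
  ∀ y : Y, unitAt X (D (ι.base y)) (ι.base y)

/-- Two Cartier divisor data define the same Cartier divisor. -/
def DivEq (D E : X → (X.functionField)ˣ) : Prop :=
  ∀ x : X, unitAt X (D x * (E x)⁻¹) x

/-- `g` belongs to `G(X̄, Y) = ∩_{y ∈ Y} ker(O_{X̄,y}ˣ → O_{Y,y}ˣ)`:
at every point of `Y` it is the germ of a unit restricting to `1` on `Y`. -/
def GSect (g : (X.functionField)ˣ) : Prop :=
  ∀ y : Y, ∃ h : X.presheaf.stalk (ι.base y), IsUnit h ∧
    algebraMap (X.presheaf.stalk (ι.base y)) X.functionField h = (g : X.functionField) ∧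
    ι.stalkMap y h = 1

/-- A global unit on `X̄` lies in `Γ(X̄, G_{X̄,Y})`, i.e. restricts to `1` on `Y`. -/
def GGlobal (F : (Γ(X, ⊤))ˣ) : Prop := ι.app ⊤ (F : Γ(X, ⊤)) = 1

instance : Nonempty (⊤ : X.Opens) := ⟨⟨Nonempty.some inferInstance, trivial⟩⟩

/-- The inclusion of global sections into the function field, as a map on units. -/
def globalUnitToFF : (Γ(X, ⊤))ˣ →* (X.functionField)ˣ :=
  Units.map (((X.germToFunctionField ⊤).hom : Γ(X, ⊤) →+* X.functionField).toMonoidHom)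

/-- The rational function `f`, a unit on an open neighbourhood `U` of `Y`,
restricts to the unit `u ∈ Γ(Y, O_Y)ˣ`. -/
def RestrictsTo (f : (X.functionField)ˣ) (u : (Γ(Y, ⊤))ˣ) : Prop :=
  ∃ (U : X.Opens) (hne : Nonempty U) (hle : (⊤ : Y.Opens) ≤ ι ⁻¹ᵁ U) (F : (Γ(X, U))ˣ),
    Scheme.germToFunctionField X U (h := hne) (F : Γ(X, U)) = (f : X.functionField) ∧
    Y.presheaf.map (homOfLE hle).op (ι.app U (F : Γ(X, U))) = (u : Γ(Y, ⊤))

/-- Data for an element of the relative Picard group `Pic(X̄, Y)` on an integral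
scheme: a pair `(L, σ)` of a line bundle and a trivialization over `Y`, presented
by a Cartier divisor `D` avoiding `Y` (so `L = O(D)`, canonically trivialized
near `Y`) and a unit `u ∈ Γ(Y, O_Y)ˣ` (twisting the canonical trivialization). -/
structure PicData where
  D : X → (X.functionField)ˣ
  cartier : IsCartierData X D
  avoids : AvoidsY X Y ι D
  u : (Γ(Y, ⊤))ˣ

/-- Two `PicData` represent the same element of `Pic(X̄, Y)`: the divisors differ
by the divisor of a rational function `f` which is a unit near `Y` and whose
restriction to `Y` accounts for the difference of the trivializations. -/
def PicEquiv (p q : PicData X Y ι) : Prop :=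
  ∃ (f : (X.functionField)ˣ) (w : (Γ(Y, ⊤))ˣ),
    RestrictsTo X Y ι f w ∧ DivEq X (fun x => p.D x * f) q.D ∧ p.u * w = q.u

/-- An element of `Pic(X̄, Y)` is liftable if (up to equivalence) its trivialization
over `Y` is the restriction of a trivialization on an open neighbourhood of `Y`. -/
def Liftable (p : PicData X Y ι) : Prop :=
  ∃ f : (X.functionField)ˣ, RestrictsTo X Y ι f p.u

lemma unitAt_one (x : X) : unitAt X 1 x :=
  ⟨1, isUnit_one, by simp⟩

lemma isCartierData_const (g : (X.functionField)ˣ) : IsCartierData X (fun _ => g) :=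
  fun x => ⟨⊤, trivial, fun y _ => by simpa using unitAt_one X y⟩

lemma isCartierData_one : IsCartierData X (fun _ => 1) := isCartierData_const X 1

lemma avoidsY_one : AvoidsY X Y ι (fun _ => 1) := fun y => unitAt_one X _

/-- The trivial element of `Pic(X̄, Y)`. -/
def trivialPicData : PicData X Y ι :=
  ⟨fun _ => 1, isCartierData_one X, avoidsY_one X Y ι, 1⟩


section Helpers

open TopologicalSpace Opposite

set_option linter.unusedSectionVars false

variable [AlgebraicGeometry.IsIntegral X]

lemma algebraMap_stalk_germ {U : X.Opens} {x : X} (hx : x ∈ U) (f : Γ(X,U)) :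
    algebraMap (X.presheaf.stalk x) X.functionField (X.presheaf.germ U x hx f)
      = X.presheaf.germ U (genericPoint X)
          (((genericPoint_spec X).specializes trivial).mem_open U.isOpen hx) f := by
  rw [RingHom.algebraMap_toAlgebra]
  exact X.presheaf.germ_stalkSpecializes_apply hx ((genericPoint_spec X).specializes trivial) f

lemma stalkToFF_injective (x : X) :
    Function.Injective (algebraMap (X.presheaf.stalk x) X.functionField) := by
  intro s t hst
  obtain ⟨U, hxU, f, rfl⟩ := TopCat.Presheaf.germ_exist X.presheaf s
  obtain ⟨V, hxV, g, rfl⟩ := TopCat.Presheaf.germ_exist X.presheaf t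
  rw [← X.presheaf.germ_res_apply (homOfLE (inf_le_left : U ⊓ V ≤ U)) x (TopologicalSpace.Opens.mem_inf.mpr ⟨hxU, hxV⟩) f,
      ← X.presheaf.germ_res_apply (homOfLE (inf_le_right : U ⊓ V ≤ V)) x (TopologicalSpace.Opens.mem_inf.mpr ⟨hxU, hxV⟩) g] at hst ⊢
  rw [algebraMap_stalk_germ, algebraMap_stalk_germ] at hst
  rw [germ_injective_of_isIntegral X (genericPoint X)
    (((genericPoint_spec X).specializes trivial).mem_open (U ⊓ V).isOpen ⟨hxU, hxV⟩) hst]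

lemma algebraMap_genericPoint (h : X.presheaf.stalk (genericPoint X.carrier)) :
    @algebraMap _ _ _ _ (stalkFunctionFieldAlgebra X (genericPoint X.carrier)) h = h := by
  obtain ⟨U, hxU, f, rfl⟩ := TopCat.Presheaf.germ_exist X.presheaf h
  exact algebraMap_stalk_germ X hxU f

lemma exists_section_of_isUnit_stalk {x : X} (h : X.presheaf.stalk x) (hu : IsUnit h) :
    ∃ (V : X.Opens) (hx : x ∈ V) (s : Γ(X, V)), IsUnit s ∧ X.presheaf.germ V x hx s = h := by
  obtain ⟨U, hxU, f, rfl⟩ := TopCat.Presheaf.germ_exist X.presheaf h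
  refine ⟨X.basicOpen f, (X.mem_basicOpen f x hxU).mpr hu,
    X.presheaf.map (homOfLE (X.basicOpen_le f)).op f, ?_, ?_⟩
  · exact RingedSpace.isUnit_res_basicOpen X.toLocallyRingedSpace.toRingedSpace f
  · rw [X.presheaf.germ_res_apply]

lemma unitAt_mul {g g' : (X.functionField)ˣ} {x : X} (h : unitAt X g x) (h' : unitAt X g' x) :
    unitAt X (g * g') x := by
  obtain ⟨a, ha, hag⟩ := h; obtain ⟨b, hb, hbg⟩ := h'
  exact ⟨a * b, ha.mul hb, by rw [map_mul, hag, hbg, Units.val_mul]⟩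

lemma unitAt_inv {g : (X.functionField)ˣ} {x : X} (h : unitAt X g x) : unitAt X g⁻¹ x := by
  obtain ⟨a, ha, hag⟩ := h
  refine ⟨↑ha.unit⁻¹, Units.isUnit _, ?_⟩
  have h1 : a * ↑ha.unit⁻¹ = 1 := ha.mul_val_inv
  have h2 := congrArg (algebraMap (X.presheaf.stalk x) X.functionField) h1
  rw [map_mul, map_one, hag] at h2
  rw [Units.val_inv_eq_inv_val]
  exact (inv_eq_of_mul_eq_one_right h2).symm

lemma unitAt_congr {g g' : (X.functionField)ˣ} (hgg : g = g') {x : X} (h : unitAt X g x) :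
    unitAt X g' x := hgg ▸ h

/-- Gluing a family of unit sections all of which map to the same rational function. -/
lemma glue_units {κ : Type} (V : κ → X.Opens) (s : ∀ i, Γ(X, V i)) (hu : ∀ i, IsUnit (s i))
    (g : X.functionField)
    (hs : ∀ (i : κ) (x : X) (hx : x ∈ V i),
      algebraMap (X.presheaf.stalk x) X.functionField (X.presheaf.germ (V i) x hx (s i)) = g)
    (W : X.Opens) (hVW : ∀ i, V i ≤ W) (hcov : W ≤ iSup V) :
    ∃ F : Γ(X, W), IsUnit F ∧ ∀ i, X.presheaf.map (homOfLE (hVW i)).op F = s i := by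
  have key : ∀ (i j : κ) (x : X) (hi : x ∈ V i) (hj : x ∈ V j),
      X.presheaf.germ (V i) x hi (s i) = X.presheaf.germ (V j) x hj (s j) := by
    intro i j x hi hj
    apply stalkToFF_injective X x
    rw [hs i x hi, hs j x hj]
  have hcompat : TopCat.Presheaf.IsCompatible X.sheaf.1 V s := by
    intro i j
    apply TopCat.Presheaf.section_ext X.sheaf (V i ⊓ V j)
    intro x hx
    show X.presheaf.germ _ x hx (X.presheaf.map _ (s i)) =
      X.presheaf.germ _ x hx (X.presheaf.map _ (s j))
    rw [X.presheaf.germ_res_apply, X.presheaf.germ_res_apply]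
    exact key i j x hx.1 hx.2
  obtain ⟨F, hF, -⟩ := X.sheaf.existsUnique_gluing' V W (fun i => homOfLE (hVW i)) hcov s hcompat
  refine ⟨F, ?_, hF⟩
  apply RingedSpace.isUnit_of_isUnit_germ X.toLocallyRingedSpace.toRingedSpace W F
  intro x hx
  obtain ⟨i, hxi⟩ : ∃ i, x ∈ V i := by simpa [Opens.mem_iSup] using hcov hx
  have hgerm : X.presheaf.germ W x hx F = X.presheaf.germ (V i) x hxi (s i) := by
    conv_rhs => rw [← hF i]
    exact (X.presheaf.germ_res_apply (homOfLE (hVW i)) x hxi F).symm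
  show IsUnit (X.presheaf.germ W x hx F)
  rw [hgerm]
  exact (hu i).map _


lemma algebraMap_germ_eq {U : X.Opens} {x x' : X} (hx : x ∈ U) (hx' : x' ∈ U) (f : Γ(X,U)) :
    algebraMap (X.presheaf.stalk x) X.functionField (X.presheaf.germ U x hx f)
      = algebraMap (X.presheaf.stalk x') X.functionField (X.presheaf.germ U x' hx' f) := by
  rw [algebraMap_stalk_germ, algebraMap_stalk_germ]

lemma map_eq_one {R S : CommRingCat} (φ : R ⟶ S) {a b : R} (hab : a * b = 1)
    (ha : φ a = 1) : φ b = 1 := by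
  have h2 := congrArg φ hab
  rw [map_mul, map_one, ha, one_mul] at h2
  exact h2

variable [IsClosedImmersion ι]

lemma restrictsTo_unitAt {f : (X.functionField)ˣ} {u : (Γ(Y, ⊤))ˣ}
    (h : RestrictsTo X Y ι f u) (y : Y) : unitAt X f (ι.base y) := by
  obtain ⟨U, hne, hle, F, hFF, -⟩ := h
  have hy : ι.base y ∈ U := hle (trivial : y ∈ (⊤ : Y.Opens))
  refine ⟨X.presheaf.germ U (ι.base y) hy F, (F.isUnit).map _, ?_⟩
  rw [algebraMap_stalk_germ]
  exact hFF

lemma gsect_inv_of_restrictsTo {f : (X.functionField)ˣ}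
    (h : RestrictsTo X Y ι f 1) : GSect X Y ι f⁻¹ := by
  obtain ⟨U, hne, hle, F, hFF, hres⟩ := h
  intro y
  have hy : ι.base y ∈ U := hle (trivial : y ∈ (⊤ : Y.Opens))
  let Fy : (X.presheaf.stalk (ι.base y))ˣ :=
    Units.map ((X.presheaf.germ U (ι.base y) hy).hom.toMonoidHom) F
  have hFyval : (Fy : X.presheaf.stalk (ι.base y)) = X.presheaf.germ U (ι.base y) hy F := rfl
  have hmul : (Fy : X.presheaf.stalk (ι.base y)) * ↑Fy⁻¹ = 1 := Fy.mul_inv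
  have hFyFF : algebraMap (X.presheaf.stalk (ι.base y)) X.functionField ↑Fy
      = (f : X.functionField) := by
    rw [hFyval, algebraMap_stalk_germ]
    exact hFF
  refine ⟨↑Fy⁻¹, Fy⁻¹.isUnit, ?_, ?_⟩
  · have h2 := congrArg (algebraMap (X.presheaf.stalk (ι.base y)) X.functionField) hmul
    rw [map_mul, map_one, hFyFF] at h2
    rw [Units.val_inv_eq_inv_val]
    exact (inv_eq_of_mul_eq_one_right h2).symm
  · apply map_eq_one (ι.stalkMap y) hmul
    rw [hFyval, Scheme.Hom.germ_stalkMap_apply]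
    have : Y.presheaf.germ (⊤ : Y.Opens) y trivial
        (Y.presheaf.map (homOfLE hle).op (ι.app U F)) =
        Y.presheaf.germ (ι ⁻¹ᵁ U) y hy (ι.app U F) :=
      Y.presheaf.germ_res_apply (homOfLE hle) y trivial (ι.app U F)
    rw [← this, hres]
    simp

lemma restrictsTo_of_gsect (g : (X.functionField)ˣ) (hg : GSect X Y ι g) :
    RestrictsTo X Y ι g⁻¹ 1 := by
  choose h hu hFF hst using hg
  -- inverse stalk elements over points of Y
  have hkmul : ∀ y : Y, h y * ↑(hu y).unit⁻¹ = 1 := fun y => (hu y).mul_val_inv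
  have hkFF : ∀ y : Y, algebraMap (X.presheaf.stalk (ι.base y)) X.functionField
      ↑(hu y).unit⁻¹ = ((g⁻¹ : (X.functionField)ˣ) : X.functionField) := by
    intro y
    have h2 := congrArg (algebraMap (X.presheaf.stalk (ι.base y)) X.functionField) (hkmul y)
    rw [map_mul, map_one, hFF] at h2
    rw [Units.val_inv_eq_inv_val]
    exact (inv_eq_of_mul_eq_one_right h2).symm
  have hkst : ∀ y : Y, ι.stalkMap y ↑(hu y).unit⁻¹ = 1 :=
    fun y => map_eq_one (ι.stalkMap y) (hkmul y) (hst y)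
  choose Vy my sy hsyu hsyg using
    fun y : Y => exists_section_of_isUnit_stalk X
      ((((hu y).unit⁻¹ : (X.presheaf.stalk (ι.base y))ˣ)) : X.presheaf.stalk (ι.base y))
      ((hu y).unit⁻¹).isUnit
  -- a piece at the generic point
  obtain ⟨V₀, m₀, s₀, hs₀u, hs₀g⟩ := exists_section_of_isUnit_stalk X
    (((g⁻¹ : (X.functionField)ˣ) : X.functionField) : X.presheaf.stalk (genericPoint X.carrier))
    (g⁻¹).isUnit
  let V : Option Y → X.Opens := fun i => Option.elim i V₀ Vy
  let s : ∀ i, Γ(X, V i) := fun i => match i with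
    | Option.none => s₀
    | Option.some y => sy y
  have hsu : ∀ i, IsUnit (s i) := fun i => match i with
    | Option.none => hs₀u
    | Option.some y => hsyu y
  have hs : ∀ (i : Option Y) (x : X) (hx : x ∈ V i),
      algebraMap (X.presheaf.stalk x) X.functionField (X.presheaf.germ (V i) x hx (s i))
        = ((g⁻¹ : (X.functionField)ˣ) : X.functionField) := by
    rintro (_ | y) x hx
    · have hx' : x ∈ V₀ := hx
      show algebraMap _ _ (X.presheaf.germ V₀ x hx' s₀) = _
      rw [algebraMap_germ_eq X hx' m₀, hs₀g, algebraMap_genericPoint]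
    · have hx' : x ∈ Vy y := hx
      show algebraMap _ _ (X.presheaf.germ (Vy y) x hx' (sy y)) = _
      rw [algebraMap_germ_eq X hx' (my y), hsyg, hkFF]
  obtain ⟨F, hFu, hres⟩ := glue_units X V s hsu _ hs (iSup V) (fun i => le_iSup V i) le_rfl
  have hgen : genericPoint X.carrier ∈ iSup V := le_iSup V Option.none m₀
  have hle : (⊤ : Y.Opens) ≤ ι ⁻¹ᵁ iSup V :=
    fun y _ => le_iSup V (Option.some y) (my y)
  have hgermF : ∀ (x : X) (hx : x ∈ iSup V),
      algebraMap (X.presheaf.stalk x) X.functionField (X.presheaf.germ (iSup V) x hx F)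
        = ((g⁻¹ : (X.functionField)ˣ) : X.functionField) := by
    intro x hx
    rw [algebraMap_germ_eq X hx hgen]
    have : X.presheaf.germ (V Option.none) (genericPoint X.carrier) m₀
        (X.presheaf.map (homOfLE (le_iSup V Option.none)).op F)
        = X.presheaf.germ (iSup V) (genericPoint X.carrier) hgen F :=
      X.presheaf.germ_res_apply _ _ m₀ F
    rw [← this, hres Option.none, algebraMap_genericPoint]
    exact hs₀g
  refine ⟨iSup V, ⟨⟨_, hgen⟩⟩, hle, hFu.unit, ?_, ?_⟩
  · rw [hFu.unit_spec]
    have := hgermF (genericPoint X.carrier)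
      (((genericPoint_spec X).mem_open_set_iff (iSup V).isOpen).mpr
        (by exact ⟨_, trivial, hgen⟩))
    rw [algebraMap_genericPoint] at this
    exact this
  · rw [hFu.unit_spec]
    apply TopCat.Presheaf.section_ext Y.sheaf (⊤ : Y.Opens)
    intro q hq
    show Y.presheaf.germ (⊤ : Y.Opens) q hq
        (Y.presheaf.map (homOfLE hle).op (ι.app (iSup V) F)) = _
    rw [Y.presheaf.germ_res_apply (homOfLE hle) q hq (ι.app (iSup V) F)]
    rw [← Scheme.Hom.germ_stalkMap_apply ι (iSup V) q (hle hq)]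
    have hFq : X.presheaf.germ (iSup V) (ι.base q) (hle hq) F = ↑(hu q).unit⁻¹ := by
      have h1 : X.presheaf.germ (V (Option.some q)) (ι.base q) (my q)
          (X.presheaf.map (homOfLE (le_iSup V (Option.some q))).op F)
          = X.presheaf.germ (iSup V) (ι.base q) (hle hq) F :=
        X.presheaf.germ_res_apply _ _ (my q) F
      rw [← h1, hres (Option.some q)]
      exact hsyg q
    rw [hFq, hkst q]
    show _ = Y.presheaf.germ (⊤ : Y.Opens) q hq ((1 : (Γ(Y, ⊤))ˣ) : Γ(Y, ⊤))
    simp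

end Helpers
end

/-- **Relative Picard group exact sequence** (for an integral scheme `X̄` with
closed subscheme `Y ⊆ X̄`): the sequence
`0 → Γ(X̄, G_{X̄,Y}) → G(X̄,Y) → Div(X̄,Y) → P̃ic(X̄,Y) → 0`
is exact, where the second map is `f ↦ div(f)` and `P̃ic` is the liftable part of
the relative Picard group.  Exactness is stated elementwise:
(1) `Γ(X̄, G_{X̄,Y}) → G(X̄,Y) ⊆ K(X̄)ˣ` is injective;
(2) an element `g` of `G(X̄,Y)` has `div(g) = 0` iff it comes from `Γ(X̄, G_{X̄,Y})`;
(3) a Cartier divisor `D` avoiding `Y` becomes trivial in `P̃ic(X̄,Y)` iff it is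
the divisor of some `g ∈ G(X̄,Y)`;
(4) every liftable class is the class of some Cartier divisor avoiding `Y`. -/
theorem stmt_9 (X Y : Scheme.{0}) [AlgebraicGeometry.IsIntegral X]
    (ι : Y ⟶ X) [IsClosedImmersion ι] :
    (∀ F G : (Γ(X, ⊤))ˣ, GGlobal X Y ι F → GGlobal X Y ι G →
        globalUnitToFF X F = globalUnitToFF X G → F = G) ∧
    (∀ g : (X.functionField)ˣ, GSect X Y ι g →
        ((∀ x : X, unitAt X g x) ↔ ∃ F : (Γ(X, ⊤))ˣ, GGlobal X Y ι F ∧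
          globalUnitToFF X F = g)) ∧
    (∀ (D : X → (X.functionField)ˣ) (hD : IsCartierData X D) (hav : AvoidsY X Y ι D),
        (PicEquiv X Y ι ⟨D, hD, hav, 1⟩ (trivialPicData X Y ι) ↔
          ∃ g : (X.functionField)ˣ, GSect X Y ι g ∧ DivEq X D (fun _ => g))) ∧
    (∀ p : PicData X Y ι, Liftable X Y ι p →
        ∃ (D : X → (X.functionField)ˣ) (hD : IsCartierData X D) (hav : AvoidsY X Y ι D),
          PicEquiv X Y ι ⟨D, hD, hav, 1⟩ p) := by
  refine ⟨?_, ?_, ?_, ?_⟩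
  · -- (1) injectivity of Γ(X̄, G) → G(X̄,Y)
    intro F G _ _ h
    apply Units.ext
    apply X.germToFunctionField_injective ⊤
    have h2 := congrArg Units.val h
    simpa [globalUnitToFF] using h2
  · -- (2) exactness at G(X̄,Y)
    intro g hg
    constructor
    · intro hx
      choose hch hu hFF using hx
      choose V m s hsu hgerm using fun x : X => exists_section_of_isUnit_stalk X (hch x) (hu x)
      have hs : ∀ (x : X) (z : X) (hz : z ∈ V x),
          algebraMap (X.presheaf.stalk z) X.functionField
            (X.presheaf.germ (V x) z hz (s x)) = (g : X.functionField) := by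
        intro x z hz
        rw [algebraMap_germ_eq X hz (m x), hgerm, hFF]
      obtain ⟨F, hFu, hres⟩ := glue_units X V s hsu _ hs ⊤ (fun _ => le_top)
        (fun z _ => TopologicalSpace.Opens.mem_iSup.mpr ⟨z, m z⟩)
      have hFg : ∀ (x : X) (hx' : x ∈ (⊤ : X.Opens)),
          algebraMap (X.presheaf.stalk x) X.functionField
            (X.presheaf.germ ⊤ x hx' F) = (g : X.functionField) := by
        intro x hx'
        have h1 : X.presheaf.germ (V x) x (m x)
            (X.presheaf.map (homOfLE (le_top : V x ≤ ⊤)).op F)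
            = X.presheaf.germ ⊤ x hx' F := X.presheaf.germ_res_apply _ _ (m x) F
        rw [← h1, hres x]
        exact hs x x (m x)
      refine ⟨hFu.unit, ?_, ?_⟩
      · show ι.app ⊤ ↑hFu.unit = 1
        rw [hFu.unit_spec]
        apply TopCat.Presheaf.section_ext Y.sheaf (ι ⁻¹ᵁ ⊤)
        intro q hq
        show Y.presheaf.germ (ι ⁻¹ᵁ ⊤) q hq (ι.app ⊤ F) = Y.presheaf.germ (ι ⁻¹ᵁ ⊤) q hq 1
        rw [← Scheme.Hom.germ_stalkMap_apply ι ⊤ q trivial, map_one]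
        obtain ⟨hq', hqu, hqFF, hqst⟩ := hg q
        have heq : X.presheaf.germ ⊤ (ι.base q) trivial F = hq' := by
          apply stalkToFF_injective X (ι.base q)
          rw [hFg (ι.base q) trivial, hqFF]
        rw [heq, hqst]
      · apply Units.ext
        show Scheme.germToFunctionField X ⊤ ↑hFu.unit = (g : X.functionField)
        rw [hFu.unit_spec]
        have := hFg (genericPoint X.carrier) trivial
        rwa [algebraMap_genericPoint] at this
    · rintro ⟨F, hFgl, rfl⟩
      intro x
      refine ⟨X.presheaf.germ ⊤ x (TopologicalSpace.Opens.mem_top x) ↑F, (F.isUnit).map _, ?_⟩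
      rw [algebraMap_stalk_germ]
      rfl
  · -- (3) exactness at Div(X̄,Y)
    intro D hD hav
    constructor
    · rintro ⟨f, w, hre, hdiv, hw⟩
      have hw1 : w = 1 := by rwa [one_mul] at hw
      subst hw1
      refine ⟨f⁻¹, gsect_inv_of_restrictsTo X Y ι hre, ?_⟩
      intro x
      exact unitAt_congr X (by simp [trivialPicData]) (hdiv x)
    · rintro ⟨g, hgs, hdiv⟩
      refine ⟨g⁻¹, 1, restrictsTo_of_gsect X Y ι g hgs, ?_, one_mul 1⟩
      intro x
      exact unitAt_congr X (by simp [trivialPicData]) (hdiv x)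
  · -- (4) surjectivity onto the liftable part of Pic(X̄,Y)
    rintro p ⟨f, hre⟩
    refine ⟨fun x => p.D x * f⁻¹, ?_, ?_, f, p.u, hre, ?_, one_mul p.u⟩
    · intro x
      obtain ⟨U, hxU, hU⟩ := p.cartier x
      exact ⟨U, hxU, fun z hz => unitAt_congr X (by group) (hU z hz)⟩
    · intro y
      exact unitAt_mul X (p.avoids y) (unitAt_inv X (restrictsTo_unitAt X Y ι hre y))
    · intro x
      exact unitAt_congr X (by group) (unitAt_one X x)
end

section
/- Witt vector congruence: if f = 1 + t^s g in a commutative ring A, then the Teichmüller lift satisfies [f] = [1] + Σ_{j=0}^{n-1} V^j([t]^s g_j) in W_n(A) for some elements g_j ∈ W_{n−j}(A). -/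
open WittVector

section Aux

lemma aux_aeval_mem {σ R : Type*} [CommRing R] (I : Ideal R)
    (φ : MvPolynomial σ ℤ) (hφ : MvPolynomial.constantCoeff φ = 0) (f : σ → R)
    (hf : ∀ i, f i ∈ I) : MvPolynomial.aeval f φ ∈ I := by
  have hx : φ ∈ Ideal.span (MvPolynomial.X '' (Set.univ : Set σ) :
      Set (MvPolynomial σ ℤ)) := by
    rw [MvPolynomial.mem_ideal_span_X_image]
    intro m hm
    by_contra hcon
    push_neg at hcon
    have hm0 : m = 0 := Finsupp.ext fun i => by simpa using hcon i (Set.mem_univ i)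
    rw [MvPolynomial.mem_support_iff, hm0] at hm
    exact hm hφ
  refine Submodule.span_induction (p := fun q _ => MvPolynomial.aeval f q ∈ I)
    ?_ ?_ ?_ ?_ hx
  · rintro _ ⟨i, -, rfl⟩
    simpa using hf i
  · simp
  · intro a b _ _ ha hb
    simpa using I.add_mem ha hb
  · intro a b _ hb
    rw [smul_eq_mul, map_mul]
    exact I.mul_mem_left _ hb

variable {p : ℕ} [hp : Fact p.Prime] {A : Type*} [CommRing A]

lemma aux_sub_mem (I : Ideal A) {x y : WittVector p A}
    (hx : ∀ i, x.coeff i ∈ I) (hy : ∀ i, y.coeff i ∈ I) (i : ℕ) :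
    (x - y).coeff i ∈ I := by
  rw [WittVector.sub_coeff]
  unfold WittVector.peval
  apply aux_aeval_mem _ _ (WittVector.constantCoeff_wittSub p i)
  rintro ⟨a, b⟩
  fin_cases a
  · simpa [Function.uncurry] using hx b
  · simpa [Function.uncurry] using hy b

lemma aux_exists_versch {x : WittVector p A} (h0 : x.coeff 0 = 0) :
    ∃ y : WittVector p A, WittVector.verschiebung y = x ∧
      ∀ i, y.coeff i = x.coeff (i + 1) := by
  refine ⟨WittVector.mk p (fun i => x.coeff (i + 1)), ?_, fun i => rfl⟩
  ext i
  cases i with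
  | zero => rw [WittVector.verschiebung_coeff_zero, h0]
  | succ i => rw [WittVector.verschiebung_coeff_succ]; rfl

lemma aux_teich_sub_dvd (u : A) (i : ℕ) :
    u ∣ (teichmuller p (1 + u) - teichmuller p 1).coeff i := by
  set F : WittVector p (Polynomial A) :=
    teichmuller p (1 + Polynomial.X) - teichmuller p 1 with hF
  have h0 : (F.coeff i).coeff 0 = 0 := by
    have hmap : WittVector.map (Polynomial.evalRingHom (0 : A)) F = 0 := by
      simp [hF, map_sub]
    have := congrArg (fun z : WittVector p A => z.coeff i) hmap
    simpa [WittVector.map_coeff, Polynomial.coeff_zero_eq_eval_zero] using this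
  obtain ⟨q, hq⟩ := Polynomial.X_dvd_iff.mpr h0
  refine ⟨Polynomial.eval u q, ?_⟩
  have hmap : teichmuller p (1 + u) - teichmuller p 1 =
      WittVector.map (Polynomial.evalRingHom u) F := by
    simp [hF, map_sub]
  rw [hmap, WittVector.map_coeff, hq]
  simp

lemma aux_main (u : A) (x : WittVector p A) (hx : ∀ i, u ∣ x.coeff i) (n : ℕ) :
    ∃ (gs : ℕ → WittVector p A) (h : WittVector p A),
      x = (∑ j ∈ Finset.range n,
          (verschiebung (p := p))^[j] (teichmuller p u * gs j)) +
        (verschiebung (p := p))^[n] h ∧ ∀ i, u ∣ h.coeff i := by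
  induction n with
  | zero => exact ⟨fun _ => 0, x, by simp, hx⟩
  | succ n ih =>
    obtain ⟨gs, h, hEq, hdvd⟩ := ih
    obtain ⟨c, hc⟩ := hdvd 0
    set y := h - teichmuller p u * teichmuller p c with hy
    have hsum : y + teichmuller p u * teichmuller p c = h := sub_add_cancel _ _
    have hy0 : y.coeff 0 = 0 := by
      have h2 := congrArg (fun z : WittVector p A => z.coeff 0) hsum
      simp only [WittVector.add_coeff_zero, WittVector.mul_coeff_zero,
        WittVector.teichmuller_coeff_zero] at h2
      have h3 : y.coeff 0 + u * c = u * c := by rw [h2, hc]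
      linear_combination h3
    obtain ⟨h', hVh', hcoeff⟩ := aux_exists_versch hy0
    have huc : ∀ i, (teichmuller p u * teichmuller p c).coeff i ∈
        Ideal.span ({u} : Set A) := by
      intro i
      rw [← map_mul]
      cases i with
      | zero =>
        rw [WittVector.teichmuller_coeff_zero, Ideal.mem_span_singleton]
        exact Dvd.intro c rfl
      | succ i =>
        rw [WittVector.teichmuller_coeff_pos p _ (i + 1) (Nat.succ_pos i)]
        exact Ideal.zero_mem _
    have hdvd' : ∀ i, u ∣ h'.coeff i := by
      intro i
      rw [hcoeff i, ← Ideal.mem_span_singleton]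
      exact aux_sub_mem _ (fun j => Ideal.mem_span_singleton.mpr (hdvd j)) huc (i + 1)
    refine ⟨Function.update gs n (teichmuller p c), h', ?_, hdvd'⟩
    have hh : h = teichmuller p u * teichmuller p c + verschiebung h' := by
      rw [hVh', hy]; ring
    rw [hEq, hh, Finset.sum_range_succ]
    have hupdate : ∀ j ∈ Finset.range n,
        (verschiebung (p := p))^[j]
            (teichmuller p u * Function.update gs n (teichmuller p c) j) =
          (verschiebung (p := p))^[j] (teichmuller p u * gs j) := by
      intro j hj
      rw [Function.update_of_ne (Finset.mem_range.mp hj).ne]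
    rw [Finset.sum_congr rfl hupdate, Function.update_self, iterate_map_add,
      Function.iterate_succ_apply, add_assoc]

end Aux

/-- Witt vector congruence: if `f = 1 + t^s * g` in a commutative ring `A` of
characteristic `p`, then in `W_n(A)` the Teichmüller lift satisfies
`[f] = [1] + Σ_{j=0}^{n-1} V^j([t]^s * g_j)` for some `g_j ∈ W_{n−j}(A)`.
We state this in the full ring of Witt vectors `𝕎 A`: there are Witt vectors
`g_j` (lifting the length-`(n−j)` truncations) and an error term `h` absorbed by
`V^n` such that
`[f] − [1] = Σ_{j=0}^{n-1} V^j([t]^s · g_j) + V^n h`. -/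
theorem stmt_18 (p : ℕ) [Fact p.Prime] (A : Type*) [CommRing A] [CharP A p]
    (t g : A) (s : ℕ) (hs : 1 ≤ s) (n : ℕ) :
    ∃ (gs : ℕ → WittVector p A) (h : WittVector p A),
      teichmuller p (1 + t ^ s * g) - teichmuller p 1 =
        (∑ j ∈ Finset.range n,
          (verschiebung (p := p))^[j] (teichmuller p t ^ s * gs j)) +
        (verschiebung (p := p))^[n] h := by
  obtain ⟨gs, h, hEq, -⟩ := aux_main (t ^ s)
    (teichmuller p (1 + t ^ s * g) - teichmuller p 1)
    (fun i => (dvd_mul_right (t ^ s) g).trans (aux_teich_sub_dvd (t ^ s * g) i)) n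
  refine ⟨gs, h, ?_⟩
  rw [hEq, map_pow]
end

section
/- Reciprocity presheaves form an abelian subcategory: the full subcategory Rec of presheaves with transfers having reciprocity is closed under subobjects and quotient objects in PST. -/
open CategoryTheory

universe u v

section

variable {C : Type u} [Category.{v} C] [Preadditive C]

/-- Abstract reciprocity setup, modelled on the category `Cor` of finite
correspondences on smooth `k`-schemes:
`Q X` singles out the (quasi-affine smooth) objects, `Comp X` is the type of
compactifications `X ↪ X̄` of `X`, `Mod X c` is the type of closed subschemes
`Y ⊆ X̄` with `X = X̄ − |Y|`, and `Φ c Y S ⊆ Hom(S, X)` is the subgroup of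
finite correspondences of the form `φ_* div_{C̄}(f)` with `f ∈ G(C̄, γ_φ* Y)`.
A section `a ∈ F(X)` *has modulus* `Y` if all these correspondences kill `a`. -/
def HasModulus (F : Cᵒᵖ ⥤ AddCommGrpCat)
    (Q : C → Prop) (Comp : C → Type*) (Mod : ∀ X : C, Comp X → Type*)
    (Φ : ∀ (X : C) (c : Comp X), Mod X c → ∀ S : C, AddSubgroup (S ⟶ X))
    (X : C) (c : Comp X) (Y : Mod X c) (a : F.obj (Opposite.op X)) : Prop :=
  ∀ (S : C) (z : S ⟶ X), z ∈ Φ X c Y S → F.map z.op a = 0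

/-- A presheaf with transfers `F` *has reciprocity* if every section over a
quasi-affine smooth `X` admits, for every compactification of `X`, a modulus. -/
def HasReciprocity (F : Cᵒᵖ ⥤ AddCommGrpCat)
    (Q : C → Prop) (Comp : C → Type*) (Mod : ∀ X : C, Comp X → Type*)
    (Φ : ∀ (X : C) (c : Comp X), Mod X c → ∀ S : C, AddSubgroup (S ⟶ X)) : Prop :=
  ∀ (X : C), Q X → ∀ (a : F.obj (Opposite.op X)) (c : Comp X),
    ∃ Y : Mod X c, HasModulus F Q Comp Mod Φ X c Y a

end

/-- Reciprocity presheaves form an abelian subcategory: the full subcategory `Rec`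
of presheaves with transfers having reciprocity is closed under subobjects and
quotient objects in `PST`.  Concretely: if `0 → F' → F → F'' → 0` is exact in
`PST` (so `F' ⟶ F` is objectwise injective and `F ⟶ F''` objectwise surjective)
and `F` has reciprocity, then `F'` and `F''` have reciprocity. -/
theorem stmt_19 {C : Type*} [Category C] [Preadditive C]
    (Q : C → Prop) (Comp : C → Type*) (Mod : ∀ X : C, Comp X → Type*)
    (Φ : ∀ (X : C) (c : Comp X), Mod X c → ∀ S : C, AddSubgroup (S ⟶ X))
    (F' F F'' : Cᵒᵖ ⥤ AddCommGrpCat)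
    (ι : F' ⟶ F) (hι : ∀ X : Cᵒᵖ, Function.Injective (ι.app X))
    (π : F ⟶ F'') (hπ : ∀ X : Cᵒᵖ, Function.Surjective (π.app X))
    (hF : HasReciprocity F Q Comp Mod Φ) :
    HasReciprocity F' Q Comp Mod Φ ∧ HasReciprocity F'' Q Comp Mod Φ := by
  constructor
  · intro X hQ a c
    obtain ⟨Y, hY⟩ := hF X hQ (ι.app _ a) c
    refine ⟨Y, fun S z hz => hι _ ?_⟩
    have := hY S z hz
    have hnat := ConcreteCategory.congr_hom (ι.naturality z.op) a
    rw [CategoryTheory.comp_apply, CategoryTheory.comp_apply] at hnat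
    rw [hnat, this]
    exact ((ι.app _).hom.map_zero).symm
  · intro X hQ a c
    obtain ⟨b, hb⟩ := hπ _ a
    obtain ⟨Y, hY⟩ := hF X hQ b c
    refine ⟨Y, fun S z hz => ?_⟩
    have hnat := ConcreteCategory.congr_hom (π.naturality z.op) b
    rw [CategoryTheory.comp_apply, CategoryTheory.comp_apply] at hnat
    rw [← hb, ← hnat, hY S z hz]
    exact (π.app _).hom.map_zero
end
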